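/- arXiv:2207.10702 — 4 statements merged into one kernel-verified Lean document; each statement's English description precedes it below -/
import Mathlib

section
/- The variance of the feature hashing inner-product estimator equals (1/m)(Σ_{i≠j} x_i² y_j² + Σ_{i≠j} x_i y_i x_j y_j), where the sums range over ordered pairs of distinct indices in {1,...,n}. -/
open Finset

/-- The global feature hashing estimator of the inner product of `x` and `y`. -/
def gEst (n m : ℕ) (h : Fin n → Fin m) (s : Fin n → Bool) (x y : Fin n → ℝ) : ℝ :=
  ∑ j : Fin m,
    (∑ i : Fin n, if h i = j then (if s i then (1:ℝ) else -1) * x i else 0) *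
    (∑ i : Fin n, if h i = j then (if s i then (1:ℝ) else -1) * y i else 0)

/-!
Writing `σ i = ±1` for the sign of `i`, the deviation `gEst - ⟨x, y⟩` is the off-diagonal part
`∑_{i ≠ k} [h i = h k] σ i σ k x i y k`. In the second moment, averaging over the signs kills
every product `σ i σ k σ i' σ k'` unless `{i', k'} = {i, k}`, since an index occurring once
contributes a factor of mean zero; a collision `h i = h k` with `i ≠ k` has probability `1/m`.
So the variance is `(1/m) ∑_{i ≠ k} x i y k (x i y k + x k y i)`.
-/

noncomputable def boolSign (b : Bool) : ℝ := if b then 1 else -1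

lemma boolSign_mul_self (b : Bool) : boolSign b * boolSign b = 1 := by
  cases b <;> norm_num [boolSign]

lemma boolSign_not (b : Bool) : boolSign (!b) = -boolSign b := by
  cases b <;> simp [boolSign]

noncomputable def collisionSign {ι κ : Type*} [DecidableEq κ] (h : ι → κ) (s : ι → Bool)
    (i k : ι) : ℝ :=
  if h i = h k then boolSign (s i) * boolSign (s k) else 0

section Signs

variable {ι : Type*} [Fintype ι] [DecidableEq ι]

lemma sum_boolSign_mul_eq_zero (a : ι) (g : (ι → Bool) → ℝ)
    (hg : ∀ s b, g (Function.update s a b) = g s) :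
    ∑ s : ι → Bool, boolSign (s a) * g s = 0 := by
  refine sum_ninvolution (fun s ↦ Function.update s a (!s a)) (fun s ↦ ?_) (fun s _ hs ↦ ?_)
    (fun _ ↦ mem_univ _) (fun s ↦ ?_)
  · simp [hg, boolSign_not]
  · simpa using congrFun hs a
  · simp

lemma sum_boolSign_mul_four {i k i' k' : ι} (hik : i ≠ k) (hik' : i' ≠ k') :
    ∑ s : ι → Bool, boolSign (s i) * boolSign (s k) * (boolSign (s i') * boolSign (s k'))
      = if s(i, k) = s(i', k') then 2 ^ Fintype.card ι else 0 := by
  split_ifs with h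
  · have h_one (s : ι → Bool) :
        boolSign (s i) * boolSign (s k) * (boolSign (s i') * boolSign (s k')) = 1 := by
      rcases Sym2.eq_iff.1 h with ⟨rfl, rfl⟩ | ⟨rfl, rfl⟩ <;>
        linear_combination boolSign (s k) ^ 2 * boolSign_mul_self (s i) + boolSign_mul_self (s k)
    simp [h_one]
  · -- some index `a` occurs exactly once among `i, k, i', k'`; flipping `s a` negates the summand
    obtain ⟨a, b, hab, ha⟩ : ∃ a b, s(a, b) = s(i, k) ∧ a ≠ i' ∧ a ≠ k' := by
      by_cases hi : i ≠ i' ∧ i ≠ k'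
      · exact ⟨i, k, rfl, hi⟩
      · refine ⟨k, i, Sym2.eq_swap, ?_⟩
        rw [Sym2.eq_iff] at h
        grind
    have hb : b ≠ a := by
      rcases Sym2.eq_iff.1 hab with ⟨rfl, rfl⟩ | ⟨rfl, rfl⟩ <;> grind
    have h_factor (s : ι → Bool) :
        boolSign (s i) * boolSign (s k) * (boolSign (s i') * boolSign (s k'))
          = boolSign (s a) * (boolSign (s b) * boolSign (s i') * boolSign (s k')) := by
      rcases Sym2.eq_iff.1 hab with ⟨rfl, rfl⟩ | ⟨rfl, rfl⟩ <;> ring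
    simp_rw [h_factor]
    exact sum_boolSign_mul_eq_zero a _ fun s c ↦ by
      simp [Function.update_of_ne hb, Function.update_of_ne ha.1.symm,
        Function.update_of_ne ha.2.symm]

end Signs

section Hashing

variable {ι κ : Type*} [Fintype ι] [DecidableEq ι] [Fintype κ] [Nonempty κ] [DecidableEq κ]

lemma sum_ite_apply_eq_apply {i k : ι} (hik : i ≠ k) :
    ∑ h : ι → κ, (if h i = h k then (1 : ℝ) else 0)
      = (Fintype.card κ : ℝ) ^ Fintype.card ι / Fintype.card κ := by
  have h_count : ∑ h : ι → κ, (if h i = h k then (1 : ℝ) else 0)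
      = (Fintype.card κ : ℝ) ^ (Fintype.card ι - 1) := by
    rw [← (Equiv.funSplitAt i κ).symm.sum_comp, Fintype.sum_prod_type, sum_comm]
    simp [Equiv.funSplitAt_symm_apply, hik.symm]
  rw [h_count, eq_div_iff (by positivity), ← pow_succ,
    Nat.sub_add_cancel (Fintype.card_pos_iff.2 ⟨i⟩)]

lemma sum_sum_collisionSign_mul_collisionSign {i k i' k' : ι} (hik : i ≠ k) (hik' : i' ≠ k') :
    ∑ h : ι → κ, ∑ s : ι → Bool, collisionSign h s i k * collisionSign h s i' k'
      = if s(i, k) = s(i', k') then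
          (Fintype.card κ : ℝ) ^ Fintype.card ι / Fintype.card κ * 2 ^ Fintype.card ι
        else 0 := by
  have h_split (h : ι → κ) (s : ι → Bool) :
      collisionSign h s i k * collisionSign h s i' k'
        = ((if h i = h k then 1 else 0) * (if h i' = h k' then 1 else 0)) *
          (boolSign (s i) * boolSign (s k) * (boolSign (s i') * boolSign (s k'))) := by
    simp only [collisionSign]
    split_ifs <;> ring
  simp_rw [h_split, ← sum_mul_sum, sum_boolSign_mul_four hik hik']
  rw [mul_ite, mul_zero]
  split_ifs with h_sym
  · have h_same (h : ι → κ) :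
        (if h i = h k then (1 : ℝ) else 0) * (if h i' = h k' then 1 else 0)
          = if h i = h k then 1 else 0 := by
      rcases Sym2.eq_iff.1 h_sym with ⟨rfl, rfl⟩ | ⟨rfl, rfl⟩ <;> split_ifs <;> grind
    simp_rw [h_same, sum_ite_apply_eq_apply hik]
  · rfl

end Hashing

section OffDiagonal

variable {α M : Type*} [DecidableEq α] [AddCommMonoid M]

lemma sum_sum_eq_sum_add_sum_offDiag (t : Finset α) (f : α → α → M) :
    ∑ i ∈ t, ∑ j ∈ t, f i j = ∑ i ∈ t, f i i + ∑ p ∈ t.offDiag, f p.1 p.2 := by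
  rw [← sum_product', ← diag_union_offDiag, sum_union (disjoint_diag_offDiag _), sum_diag]

lemma sum_sum_ite_ne (t : Finset α) (f : α → α → M) :
    ∑ i ∈ t, ∑ j ∈ t, (if i ≠ j then f i j else 0) = ∑ p ∈ t.offDiag, f p.1 p.2 := by
  rw [sum_sum_eq_sum_add_sum_offDiag, sum_ite_of_true fun p hp ↦ (mem_offDiag.1 hp).2.2]
  simp

lemma sum_offDiag_ite_sym2_eq {t : Finset α} {p : α × α} (hp : p ∈ t.offDiag)
    (f : α × α → M) :
    ∑ q ∈ t.offDiag, (if s(p.1, p.2) = s(q.1, q.2) then f q else 0) = f p + f p.swap := by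
  obtain ⟨hp₁, hp₂, hp₁₂⟩ := mem_offDiag.1 hp
  have h_filter : {q ∈ t.offDiag | s(p.1, p.2) = s(q.1, q.2)} = {p, p.swap} := by
    ext q
    simp only [mem_filter, Sym2.mk_eq_mk_iff, mem_insert, mem_singleton]
    constructor
    · rintro ⟨-, rfl | rfl⟩
      · exact Or.inl rfl
      · exact Or.inr (Prod.swap_swap q).symm
    · rintro (rfl | rfl)
      · exact ⟨hp, Or.inl rfl⟩
      · exact ⟨mem_offDiag.2 ⟨hp₂, hp₁, hp₁₂.symm⟩, Or.inr rfl⟩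
  rw [← sum_filter, h_filter, sum_pair fun h ↦ hp₁₂ (congrArg Prod.fst h)]

end OffDiagonal

lemma sum_sq_sum_mul {Ω P : Type*} [Fintype Ω] (t : Finset P) (w : P → Ω → ℝ) (a : P → ℝ) :
    ∑ ω, (∑ p ∈ t, w p ω * a p) ^ 2
      = ∑ p ∈ t, ∑ q ∈ t, a p * a q * ∑ ω, w p ω * w q ω := by
  simp_rw [sq, sum_mul_sum, mul_sum]
  rw [sum_comm]
  refine sum_congr rfl fun p _ ↦ ?_
  rw [sum_comm]
  exact sum_congr rfl fun q _ ↦ sum_congr rfl fun ω _ ↦ by ring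

lemma gEst_eq_sum_sum {n m : ℕ} (h : Fin n → Fin m) (s : Fin n → Bool) (x y : Fin n → ℝ) :
    gEst n m h s x y = ∑ i, ∑ k, collisionSign h s i k * (x i * y k) := by
  simp_rw [gEst, sum_mul_sum]
  rw [sum_comm]
  refine sum_congr rfl fun i _ ↦ ?_
  rw [sum_comm]
  refine sum_congr rfl fun k _ ↦ ?_
  simp only [collisionSign, boolSign, ite_mul, mul_ite, zero_mul, mul_zero, sum_ite_eq,
    mem_univ, if_true]
  split_ifs <;> ring

lemma gEst_sub_sum_mul {n m : ℕ} (h : Fin n → Fin m) (s : Fin n → Bool) (x y : Fin n → ℝ) :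
    gEst n m h s x y - ∑ i, x i * y i
      = ∑ p ∈ univ.offDiag, collisionSign h s p.1 p.2 * (x p.1 * y p.2) := by
  simp [gEst_eq_sum_sum, sum_sum_eq_sum_add_sum_offDiag, collisionSign, boolSign_mul_self]

/-- Variance of the feature hashing inner-product estimator:
`V = (1/m) (Σ_{i≠j} x_i² y_j² + Σ_{i≠j} x_i y_i x_j y_j)`, sums over ordered distinct pairs. -/
theorem featureHashing_variance (n m : ℕ) (hm : 0 < m) (x y : Fin n → ℝ) :
    (∑ h : Fin n → Fin m, ∑ s : Fin n → Bool,
        (gEst n m h s x y - ∑ i : Fin n, x i * y i) ^ 2)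
      / ((m : ℝ) ^ n * 2 ^ n)
    = (1 / (m : ℝ)) *
        ((∑ i : Fin n, ∑ j : Fin n, if i ≠ j then x i ^ 2 * y j ^ 2 else 0)
          + ∑ i : Fin n, ∑ j : Fin n, if i ≠ j then x i * y i * (x j * y j) else 0) := by
  have : NeZero m := ⟨hm.ne'⟩
  set C : ℝ := (m : ℝ) ^ n / m * 2 ^ n
  set a : Fin n × Fin n → ℝ := fun p ↦ x p.1 * y p.2
  have h_moment : ∀ p ∈ univ.offDiag, ∀ q ∈ univ.offDiag,
      ∑ ω : (Fin n → Fin m) × (Fin n → Bool),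
          collisionSign ω.1 ω.2 p.1 p.2 * collisionSign ω.1 ω.2 q.1 q.2
        = if s(p.1, p.2) = s(q.1, q.2) then C else 0 := fun p hp q hq ↦ by
    rw [Fintype.sum_prod_type,
      sum_sum_collisionSign_mul_collisionSign (mem_offDiag.1 hp).2.2 (mem_offDiag.1 hq).2.2]
    simp [C]
  have h_num : ∑ h : Fin n → Fin m, ∑ s : Fin n → Bool,
        (gEst n m h s x y - ∑ i : Fin n, x i * y i) ^ 2
      = C * ∑ p ∈ univ.offDiag, (x p.1 ^ 2 * y p.2 ^ 2 + x p.1 * y p.1 * (x p.2 * y p.2)) :=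
    calc _ = ∑ p ∈ univ.offDiag, ∑ q ∈ univ.offDiag,
                if s(p.1, p.2) = s(q.1, q.2) then a p * a q * C else 0 := by
          simp_rw [gEst_sub_sum_mul, ← Fintype.sum_prod_type']
          rw [sum_sq_sum_mul]
          exact sum_congr rfl fun p hp ↦ sum_congr rfl fun q hq ↦ by
            rw [h_moment p hp q hq, mul_ite, mul_zero]
      _ = ∑ p ∈ univ.offDiag, (a p * a p * C + a p * a p.swap * C) :=
          sum_congr rfl fun p hp ↦ sum_offDiag_ite_sym2_eq hp _
      _ = _ := by
          rw [mul_sum]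
          exact sum_congr rfl fun p _ ↦ by simp only [a, Prod.fst_swap, Prod.snd_swap]; ring
  rw [h_num, sum_sum_ite_ne, sum_sum_ite_ne, ← sum_add_distrib]
  simp only [C]
  field_simp
end

section
/- The variance of global feature hashing decomposes into a within-block term and a cross-block term: V_G = Σ_{l=1}^k f_l V_l + (1/m) Σ_{l1 ≠ l2} (‖x_{l1}‖² ‖y_{l2}‖² + ⟨x_{l1},y_{l1}⟩⟨x_{l2},y_{l2}⟩), where V_l = (1/(f_l m))(Σ_{i≠j within block l} x_i² y_j² + Σ_{i≠j within block l} x_i y_i x_j y_j) and f_l m is the memory allocated to block l in the local scheme. -/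
open Finset

lemma sigma_pair_sum (k : ℕ) (n : Fin k → ℕ) (g h : (l : Fin k) → Fin (n l) → ℝ) :
    (∑ p : Σ l : Fin k, Fin (n l), ∑ q : Σ l : Fin k, Fin (n l),
        if p ≠ q then g p.1 p.2 * h q.1 q.2 else 0)
    = (∑ l : Fin k, ∑ i : Fin (n l), ∑ j : Fin (n l), if i ≠ j then g l i * h l j else 0)
      + ∑ l₁ : Fin k, ∑ l₂ : Fin k,
          if l₁ ≠ l₂ then (∑ i, g l₁ i) * (∑ j, h l₂ j) else 0 := by
  rw [← Finset.univ_sigma_univ, Finset.sum_sigma]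
  simp_rw [Finset.sum_sigma]
  have key : ∀ l₁ l₂ : Fin k,
      (∑ i : Fin (n l₁), ∑ j : Fin (n l₂),
        if (⟨l₁, i⟩ : Σ l, Fin (n l)) ≠ ⟨l₂, j⟩ then g l₁ i * h l₂ j else 0)
      = (if l₁ = l₂ then
          ∑ i : Fin (n l₁), ∑ j : Fin (n l₁), if i ≠ j then g l₁ i * h l₁ j else 0 else 0)
        + (if l₁ ≠ l₂ then (∑ i, g l₁ i) * (∑ j, h l₂ j) else 0) := by
    intro l₁ l₂
    by_cases hl : l₁ = l₂
    · subst hl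
      simp
    · simp only [hl, if_false, ne_eq, not_false_iff, if_true, zero_add]
      rw [Finset.sum_mul_sum]
      apply Finset.sum_congr rfl
      intro i _
      apply Finset.sum_congr rfl
      intro j _
      have : (⟨l₁, i⟩ : Σ l, Fin (n l)) ≠ ⟨l₂, j⟩ := by
        intro hpq; exact hl (congrArg Sigma.fst hpq)
      simp [this]
  calc (∑ l₁ : Fin k, ∑ i : Fin (n l₁), ∑ l₂ : Fin k, ∑ j : Fin (n l₂),
        if (⟨l₁, i⟩ : Σ l, Fin (n l)) ≠ ⟨l₂, j⟩ then g l₁ i * h l₂ j else 0)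
      = ∑ l₁ : Fin k, ∑ l₂ : Fin k, ∑ i : Fin (n l₁), ∑ j : Fin (n l₂),
          if (⟨l₁, i⟩ : Σ l, Fin (n l)) ≠ ⟨l₂, j⟩ then g l₁ i * h l₂ j else 0 := by
        exact Finset.sum_congr rfl fun l₁ _ => Finset.sum_comm
    _ = ∑ l₁ : Fin k, ∑ l₂ : Fin k,
          ((if l₁ = l₂ then
            ∑ i : Fin (n l₁), ∑ j : Fin (n l₁), if i ≠ j then g l₁ i * h l₁ j else 0 else 0)
          + (if l₁ ≠ l₂ then (∑ i, g l₁ i) * (∑ j, h l₂ j) else 0)) := by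
        exact Finset.sum_congr rfl fun l₁ _ => Finset.sum_congr rfl fun l₂ _ => key l₁ l₂
    _ = _ := by
        simp_rw [Finset.sum_add_distrib]
        congr 1
        apply Finset.sum_congr rfl
        intro l₁ _
        simp [Finset.sum_ite_eq]

/-- Decomposition of the global feature hashing variance into within-block and cross-block
terms: with `x, y` partitioned into `k` blocks (coordinates indexed by the sigma type
`Σ l, Fin (n l)`), memory fractions `f l > 0` summing to `1`, and
`V_l = (1/(f_l m))(Σ_{i≠j in block l} x_i² y_j² + Σ_{i≠j in block l} x_i y_i x_j y_j)`,
the global variance `V_G = (1/m)(Σ_{i≠j} x_i² y_j² + Σ_{i≠j} x_i y_i x_j y_j)` equals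
`Σ_l f_l V_l + (1/m) Σ_{l1≠l2} (‖x_{l1}‖²‖y_{l2}‖² + ⟨x_{l1},y_{l1}⟩⟨x_{l2},y_{l2}⟩)`. -/
theorem globalVariance_decomposition (k m : ℕ) (hm : 0 < m) (n : Fin k → ℕ)
    (x y : (l : Fin k) → Fin (n l) → ℝ)
    (f : Fin k → ℝ) (hf : ∀ l, 0 < f l) (hfsum : ∑ l : Fin k, f l = 1) :
    (1 / (m : ℝ)) *
      ((∑ p : Σ l : Fin k, Fin (n l), ∑ q : Σ l : Fin k, Fin (n l),
          if p ≠ q then x p.1 p.2 ^ 2 * y q.1 q.2 ^ 2 else 0)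
        + ∑ p : Σ l : Fin k, Fin (n l), ∑ q : Σ l : Fin k, Fin (n l),
            if p ≠ q then x p.1 p.2 * y p.1 p.2 * (x q.1 q.2 * y q.1 q.2) else 0)
    = (∑ l : Fin k, f l *
        ((1 / (f l * (m : ℝ))) *
          ((∑ i : Fin (n l), ∑ j : Fin (n l), if i ≠ j then x l i ^ 2 * y l j ^ 2 else 0)
            + ∑ i : Fin (n l), ∑ j : Fin (n l),
                if i ≠ j then x l i * y l i * (x l j * y l j) else 0)))
      + (1 / (m : ℝ)) *
          (∑ l₁ : Fin k, ∑ l₂ : Fin k,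
            if l₁ ≠ l₂ then
              (∑ i : Fin (n l₁), x l₁ i ^ 2) * (∑ i : Fin (n l₂), y l₂ i ^ 2)
                + (∑ i : Fin (n l₁), x l₁ i * y l₁ i) * (∑ i : Fin (n l₂), x l₂ i * y l₂ i)
            else 0) := by
  have hm' : (m : ℝ) ≠ 0 := Nat.cast_ne_zero.2 hm.ne'
  rw [sigma_pair_sum k n (fun l i => x l i ^ 2) (fun l i => y l i ^ 2),
      sigma_pair_sum k n (fun l i => x l i * y l i) (fun l i => x l i * y l i)]
  have h1 : (∑ l : Fin k, f l *
        ((1 / (f l * (m : ℝ))) *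
          ((∑ i : Fin (n l), ∑ j : Fin (n l), if i ≠ j then x l i ^ 2 * y l j ^ 2 else 0)
            + ∑ i : Fin (n l), ∑ j : Fin (n l),
                if i ≠ j then x l i * y l i * (x l j * y l j) else 0)))
      = (1 / (m : ℝ)) * ∑ l : Fin k,
          ((∑ i : Fin (n l), ∑ j : Fin (n l), if i ≠ j then x l i ^ 2 * y l j ^ 2 else 0)
            + ∑ i : Fin (n l), ∑ j : Fin (n l),
                if i ≠ j then x l i * y l i * (x l j * y l j) else 0) := by
    rw [Finset.mul_sum]
    refine Finset.sum_congr rfl fun l _ => ?_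
    have hfl : f l ≠ 0 := (hf l).ne'
    field_simp
  rw [h1]
  have hsplit : ∀ (c : Prop) [Decidable c] (a b : ℝ),
      (if c then a + b else 0) = (if c then a else 0) + (if c then b else 0) := by
    intros c _ a b; split <;> simp
  simp_rw [hsplit, Finset.sum_add_distrib]
  ring
end

section
/- Norm preservation in expectation under feature hashing: for x ∈ R^n, the expectation of Σ_{j=1}^m (Σ_{i: h(i)=j} g(i) x_i)² equals ‖x‖². -/
/-! Expanding the square, the cross terms `g(i) g(k) x_i x_k` with `i ≠ k` average to zero over
the signs while `g(i)² = 1`, so for every fixed hash `h` the average over the signs is already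
`Σ_j Σ_{h(i) = j} x_i² = ‖x‖²`; averaging over `h` then changes nothing. -/

open Finset

variable {ι κ R : Type*} [Fintype ι] [DecidableEq ι] [CommRing R]

def rademacher (b : Bool) : R := if b then 1 else -1

@[simp] lemma rademacher_mul_self (b : Bool) : rademacher b * rademacher b = (1 : R) := by
  cases b <;> simp [rademacher]

@[simp] lemma rademacher_not (b : Bool) : rademacher (!b) = -(rademacher b : R) := by
  cases b <;> simp [rademacher]

lemma sum_rademacher_mul_rademacher (i k : ι) :
    ∑ s : ι → Bool, rademacher (s i) * rademacher (s k) =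
      if i = k then (2 : R) ^ Fintype.card ι else 0 := by
  split_ifs with hik
  · subst hik
    simp
  · -- flipping the sign at `i` negates the summand
    let flipAt (s : ι → Bool) : ι → Bool := Function.update s i (!s i)
    refine sum_ninvolution flipAt (fun s => ?_) (fun s _ => ?_) (fun _ => mem_univ _) (fun s => ?_)
    · simp [flipAt, Function.update_of_ne (Ne.symm hik)]
    · simp [flipAt]
    · simp [flipAt]

lemma sum_sq_sum_rademacher_mul (c : ι → R) :
    ∑ s : ι → Bool, (∑ i, rademacher (s i) * c i) ^ 2 = 2 ^ Fintype.card ι * ∑ i, c i ^ 2 := by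
  calc ∑ s : ι → Bool, (∑ i, rademacher (s i) * c i) ^ 2
      = ∑ i, ∑ k, (∑ s : ι → Bool, rademacher (s i) * rademacher (s k)) * (c i * c k) := by
        simp_rw [sq, sum_mul_sum, sum_mul]
        rw [sum_comm]
        refine sum_congr rfl fun i _ => ?_
        rw [sum_comm]
        exact sum_congr rfl fun k _ => sum_congr rfl fun s _ => by ring
    _ = 2 ^ Fintype.card ι * ∑ i, c i ^ 2 := by
        simp_rw [sum_rademacher_mul_rademacher, ite_mul, zero_mul, sum_ite_eq, mem_univ,
          if_true, mul_sum, sq]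

variable [Fintype κ] [DecidableEq κ]

lemma sum_sq_hashed_rademacher (h : ι → κ) (x : ι → R) :
    ∑ s : ι → Bool, ∑ j, (∑ i, if h i = j then rademacher (s i) * x i else 0) ^ 2 =
      2 ^ Fintype.card ι * ∑ i, x i ^ 2 := by
  have bucket (s : ι → Bool) (j : κ) :
      (∑ i, if h i = j then rademacher (s i) * x i else 0) =
        ∑ i, rademacher (s i) * if h i = j then x i else 0 := by
    simp only [mul_ite, mul_zero]
  simp_rw [bucket]
  rw [sum_comm]
  simp_rw [sum_sq_sum_rademacher_mul, ← mul_sum, ite_pow, zero_pow two_ne_zero]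
  rw [sum_comm]
  simp [sum_ite_eq]

lemma sum_sum_sq_hashed_rademacher (x : ι → R) :
    ∑ h : ι → κ, ∑ s : ι → Bool, ∑ j, (∑ i, if h i = j then rademacher (s i) * x i else 0) ^ 2 =
      Fintype.card κ ^ Fintype.card ι * 2 ^ Fintype.card ι * ∑ i, x i ^ 2 := by
  simp [sum_sq_hashed_rademacher, mul_assoc]

/-- Norm preservation in expectation under feature hashing: for `x ∈ ℝⁿ`, the expectation
over uniformly random hash `h` and independent signs of
`Σ_{j=1}^m (Σ_{i : h(i)=j} g(i) x_i)²` equals `‖x‖²`. -/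
theorem featureHashing_norm_unbiased (n m : ℕ) (hm : 0 < m) (x : Fin n → ℝ) :
    (∑ h : Fin n → Fin m, ∑ s : Fin n → Bool,
        ∑ j : Fin m,
          (∑ i : Fin n, if h i = j then (if s i then (1:ℝ) else -1) * x i else 0) ^ 2)
      / ((m : ℝ) ^ n * 2 ^ n)
    = ∑ i : Fin n, x i ^ 2 := by
  have key := sum_sum_sq_hashed_rademacher (κ := Fin m) x
  simp only [Fintype.card_fin] at key
  rw [div_eq_iff (by positivity), mul_comm]
  exact key
end

section
/- The variance of the feature-hashed squared norm estimator of x ∈ R^n equals (1/m)(Σ_{i≠j} x_i² x_j² + Σ_{i≠j} x_i² x_j²) = (2/m)(‖x‖⁴ − Σ_i x_i⁴). -/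
open Finset

private def sg (b : Bool) : ℝ := if b then 1 else -1

private lemma sg_sq (b : Bool) : sg b * sg b = 1 := by cases b <;> simp [sg]

private lemma sg_not (b : Bool) : sg (!b) = - sg b := by cases b <;> simp [sg]

private lemma hash_count (n m : ℕ) (hm : 0 < m) (a b : Fin n) (hab : a ≠ b) :
    (∑ h : Fin n → Fin m, (if h a = h b then (1:ℝ) else 0)) = (m:ℝ)^n / m := by
  rw [Finset.sum_boole]
  have e : {h : Fin n → Fin m // h a = h b} ≃ ({i : Fin n // i ≠ b} → Fin m) :=
    { toFun := fun h i => h.1 i.1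
      invFun := fun g => ⟨fun i => if hi : i = b then g ⟨a, hab⟩ else g ⟨i, hi⟩, by
        simp [hab]⟩
      left_inv := fun h => Subtype.ext (funext fun i => by
        by_cases hi : i = b
        · subst hi
          simpa using h.2
        · simp [hi])
      right_inv := fun g => by
        funext i
        simp [i.2] }
  have hcard : (Finset.univ.filter (fun h : Fin n → Fin m => h a = h b)).card
      = m ^ (n - 1) := by
    rw [← Fintype.card_subtype, Fintype.card_congr e, Fintype.card_fun]
    congr 1
    · simp
    · rw [Fintype.card_subtype_compl, Fintype.card_subtype_eq]
      simp
  rw [hcard]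
  have hn : 0 < n := a.pos
  have hm' : (m:ℝ) ≠ 0 := by positivity
  rw [eq_div_iff hm']
  push_cast
  rw [← pow_succ, Nat.sub_add_cancel hn]

private lemma sign_sum_zero (n : ℕ) (a b c d : Fin n) (hab : a ≠ b) (hcd : c ≠ d)
    (hne : ¬((c = a ∧ d = b) ∨ (c = b ∧ d = a))) :
    ∑ s : Fin n → Bool, sg (s a) * sg (s b) * sg (s c) * sg (s d) = 0 := by
  push_neg at hne
  obtain ⟨h1, h2⟩ := hne
  obtain ⟨z, hz⟩ : ∃ z : Fin n,
      (z = a ∧ z ≠ b ∧ z ≠ c ∧ z ≠ d) ∨ (z ≠ a ∧ z = b ∧ z ≠ c ∧ z ≠ d) := by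
    by_cases hac : a = c
    · exact ⟨b, Or.inr ⟨Ne.symm hab, rfl, fun h => hab (hac.trans h.symm),
        fun h => h1 hac.symm h.symm⟩⟩
    · by_cases had : a = d
      · exact ⟨b, Or.inr ⟨Ne.symm hab, rfl, fun h => h2 h.symm had.symm,
          fun h => hab (had.trans h.symm)⟩⟩
      · exact ⟨a, Or.inl ⟨rfl, hab, hac, had⟩⟩
  refine Finset.sum_involution
    (fun s _ => Function.update s z (!(s z))) ?_ ?_ ?_ ?_
  · intro s _
    rcases hz with ⟨hza, hzb, hzc, hzd⟩ | ⟨hza, hzb, hzc, hzd⟩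
    · subst hza
      simp only [Function.update_apply, if_pos rfl, eq_self_iff_true, if_true,
        if_neg (Ne.symm hzb), if_neg (Ne.symm hzc), if_neg (Ne.symm hzd), sg_not]
      ring
    · subst hzb
      simp only [Function.update_apply, if_pos rfl, eq_self_iff_true, if_true,
        if_neg (Ne.symm hza), if_neg (Ne.symm hzc), if_neg (Ne.symm hzd), sg_not]
      ring
  · intro s _ _ h
    have := congrFun h z
    simp at this
  · intro s _
    exact Finset.mem_univ _
  · intro s _
    funext w
    by_cases hw : w = z
    · subst hw
      simp
    · simp [Function.update_apply, hw]

private lemma sign_sum_match (n : ℕ) (a b c d : Fin n)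
    (h : (c = a ∧ d = b) ∨ (c = b ∧ d = a)) :
    ∑ s : Fin n → Bool, sg (s a) * sg (s b) * sg (s c) * sg (s d) = 2 ^ n := by
  have key : ∀ s : Fin n → Bool, sg (s a) * sg (s b) * sg (s c) * sg (s d) = 1 := by
    intro s
    rcases h with ⟨rfl, rfl⟩ | ⟨rfl, rfl⟩ <;> cases s c <;> cases s d <;> norm_num [sg]
  rw [Finset.sum_congr rfl (fun s _ => key s)]
  simp [Finset.card_univ]

private lemma inner_expand (n m : ℕ) (x : Fin n → ℝ) (h : Fin n → Fin m) (s : Fin n → Bool) :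
    (∑ j : Fin m, (∑ i : Fin n, if h i = j then (if s i then (1:ℝ) else -1) * x i else 0) ^ 2)
      - ∑ i : Fin n, x i ^ 2
    = ∑ p ∈ (univ : Finset (Fin n)).offDiag,
        (if h p.1 = h p.2 then (sg (s p.1) * x p.1) * (sg (s p.2) * x p.2) else 0) := by
  have e2 : ∀ i k : Fin n,
      (∑ j : Fin m, (if h i = j then sg (s i) * x i else 0) * (if h k = j then sg (s k) * x k else 0))
      = if h i = h k then (sg (s i) * x i) * (sg (s k) * x k) else 0 := by
    intro i k
    simp only [ite_mul, zero_mul, mul_ite, mul_zero]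
    rw [Finset.sum_ite_eq]
    simp [eq_comm]
  have expand : (∑ j : Fin m, (∑ i : Fin n, if h i = j then (if s i then (1:ℝ) else -1) * x i else 0) ^ 2)
      = ∑ i : Fin n, ∑ k : Fin n, (if h i = h k then (sg (s i) * x i) * (sg (s k) * x k) else 0) := by
    have step : ∀ j : Fin m,
        (∑ i : Fin n, if h i = j then (if s i then (1:ℝ) else -1) * x i else 0) ^ 2
        = ∑ i : Fin n, ∑ k : Fin n,
            (if h i = j then sg (s i) * x i else 0) * (if h k = j then sg (s k) * x k else 0) := by
      intro j
      rw [sq, Finset.sum_mul_sum]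
      rfl
    rw [Finset.sum_congr rfl fun j _ => step j, Finset.sum_comm]
    refine Finset.sum_congr rfl fun i _ => ?_
    rw [Finset.sum_comm]
    exact Finset.sum_congr rfl fun k _ => e2 i k
  have split : (∑ i : Fin n, ∑ k : Fin n, (if h i = h k then (sg (s i) * x i) * (sg (s k) * x k) else 0))
      = (∑ i : Fin n, x i ^ 2)
        + ∑ p ∈ (univ : Finset (Fin n)).offDiag,
            (if h p.1 = h p.2 then (sg (s p.1) * x p.1) * (sg (s p.2) * x p.2) else 0) := by
    rw [← Finset.sum_product']
    rw [← Finset.diag_union_offDiag (univ : Finset (Fin n)),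
      Finset.sum_union (Finset.disjoint_diag_offDiag _)]
    congr 1
    rw [Finset.sum_diag]
    refine Finset.sum_congr rfl fun i _ => ?_
    rw [if_pos rfl, mul_mul_mul_comm, sg_sq, one_mul, sq]
  rw [expand, split]
  ring

private lemma pair_sum (n m : ℕ) (hm : 0 < m) (x : Fin n → ℝ) (p q : Fin n × Fin n)
    (hp : p.1 ≠ p.2) (hq : q.1 ≠ q.2) :
    (∑ h : Fin n → Fin m, ∑ s : Fin n → Bool,
        (if h p.1 = h p.2 then (sg (s p.1) * x p.1) * (sg (s p.2) * x p.2) else 0)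
        * (if h q.1 = h q.2 then (sg (s q.1) * x q.1) * (sg (s q.2) * x q.2) else 0))
    = if (q.1 = p.1 ∧ q.2 = p.2) ∨ (q.1 = p.2 ∧ q.2 = p.1)
        then ((m:ℝ)^n / m) * 2 ^ n * (x p.1 * x p.2)^2 else 0 := by
  have factor : ∀ (h : Fin n → Fin m) (s : Fin n → Bool),
      (if h p.1 = h p.2 then (sg (s p.1) * x p.1) * (sg (s p.2) * x p.2) else 0)
        * (if h q.1 = h q.2 then (sg (s q.1) * x q.1) * (sg (s q.2) * x q.2) else 0)
      = (if h p.1 = h p.2 ∧ h q.1 = h q.2 then (1:ℝ) else 0)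
          * ((sg (s p.1) * sg (s p.2) * sg (s q.1) * sg (s q.2))
            * (x p.1 * x p.2 * (x q.1 * x q.2))) := by
    intro h s
    by_cases h1 : h p.1 = h p.2 <;> by_cases h2 : h q.1 = h q.2 <;>
      simp [h1, h2] <;> ring
  have swap_sums : (∑ h : Fin n → Fin m, ∑ s : Fin n → Bool,
      (if h p.1 = h p.2 then (sg (s p.1) * x p.1) * (sg (s p.2) * x p.2) else 0)
        * (if h q.1 = h q.2 then (sg (s q.1) * x q.1) * (sg (s q.2) * x q.2) else 0))
      = (∑ h : Fin n → Fin m, (if h p.1 = h p.2 ∧ h q.1 = h q.2 then (1:ℝ) else 0))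
        * ((∑ s : Fin n → Bool, sg (s p.1) * sg (s p.2) * sg (s q.1) * sg (s q.2))
          * (x p.1 * x p.2 * (x q.1 * x q.2))) := by
    rw [Finset.sum_mul]
    refine Finset.sum_congr rfl fun h _ => ?_
    rw [Finset.sum_congr rfl fun s _ => factor h s, ← Finset.mul_sum, Finset.sum_mul]
  rw [swap_sums]
  by_cases hmatch : (q.1 = p.1 ∧ q.2 = p.2) ∨ (q.1 = p.2 ∧ q.2 = p.1)
  · rw [if_pos hmatch]
    rw [sign_sum_match n p.1 p.2 q.1 q.2 hmatch]
    have hind : (∑ h : Fin n → Fin m, (if h p.1 = h p.2 ∧ h q.1 = h q.2 then (1:ℝ) else 0))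
        = (m:ℝ)^n / m := by
      rw [← hash_count n m hm p.1 p.2 hp]
      refine Finset.sum_congr rfl fun h _ => ?_
      rcases hmatch with ⟨e1, e2⟩ | ⟨e1, e2⟩ <;> rw [e1, e2] <;>
        simp [and_comm, eq_comm, and_self]
    rw [hind]
    have hx : x p.1 * x p.2 * (x q.1 * x q.2) = (x p.1 * x p.2)^2 := by
      rcases hmatch with ⟨e1, e2⟩ | ⟨e1, e2⟩ <;> rw [e1, e2] <;> ring
    rw [hx]
    ring
  · rw [if_neg hmatch, sign_sum_zero n p.1 p.2 q.1 q.2 hp hq hmatch]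
    ring

/-- Variance of the feature-hashed squared-norm estimator
`\widehat{‖x‖²} = Σ_j (Σ_{i : h(i)=j} g(i) x_i)²`: it equals `(2/m)(‖x‖⁴ − Σ_i x_i⁴)`. -/
theorem featureHashing_norm_variance (n m : ℕ) (hm : 0 < m) (x : Fin n → ℝ) :
    (∑ h : Fin n → Fin m, ∑ s : Fin n → Bool,
        ((∑ j : Fin m,
            (∑ i : Fin n, if h i = j then (if s i then (1:ℝ) else -1) * x i else 0) ^ 2)
          - ∑ i : Fin n, x i ^ 2) ^ 2)
      / ((m : ℝ) ^ n * 2 ^ n)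
    = (2 / (m : ℝ)) * ((∑ i : Fin n, x i ^ 2) ^ 2 - ∑ i : Fin n, x i ^ 4) := by
  set T : (Fin n → Fin m) → (Fin n → Bool) → Fin n × Fin n → ℝ := fun h s p =>
    if h p.1 = h p.2 then (sg (s p.1) * x p.1) * (sg (s p.2) * x p.2) else 0 with hT
  have step1 : (∑ h : Fin n → Fin m, ∑ s : Fin n → Bool,
        ((∑ j : Fin m,
            (∑ i : Fin n, if h i = j then (if s i then (1:ℝ) else -1) * x i else 0) ^ 2)
          - ∑ i : Fin n, x i ^ 2) ^ 2)
      = ∑ h : Fin n → Fin m, ∑ s : Fin n → Bool,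
          (∑ p ∈ (univ : Finset (Fin n)).offDiag, T h s p) ^ 2 := by
    refine Finset.sum_congr rfl fun h _ => Finset.sum_congr rfl fun s _ => ?_
    rw [inner_expand n m x h s]
  have step2 : (∑ h : Fin n → Fin m, ∑ s : Fin n → Bool,
        (∑ p ∈ (univ : Finset (Fin n)).offDiag, T h s p) ^ 2)
      = ∑ p ∈ (univ : Finset (Fin n)).offDiag, ∑ q ∈ (univ : Finset (Fin n)).offDiag,
          ∑ h : Fin n → Fin m, ∑ s : Fin n → Bool, T h s p * T h s q := by
    have e1 : (∑ h : Fin n → Fin m, ∑ s : Fin n → Bool,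
          (∑ p ∈ (univ : Finset (Fin n)).offDiag, T h s p) ^ 2)
        = ∑ h : Fin n → Fin m, ∑ p ∈ (univ : Finset (Fin n)).offDiag,
            ∑ q ∈ (univ : Finset (Fin n)).offDiag, ∑ s : Fin n → Bool, T h s p * T h s q := by
      refine Finset.sum_congr rfl fun h _ => ?_
      have hs : ∀ s : Fin n → Bool,
          (∑ p ∈ (univ : Finset (Fin n)).offDiag, T h s p) ^ 2
          = ∑ p ∈ (univ : Finset (Fin n)).offDiag,
              ∑ q ∈ (univ : Finset (Fin n)).offDiag, T h s p * T h s q := fun s => by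
        rw [sq, Finset.sum_mul_sum]
      rw [Finset.sum_congr rfl fun s _ => hs s, Finset.sum_comm]
      exact Finset.sum_congr rfl fun p _ => Finset.sum_comm
    rw [e1, Finset.sum_comm]
    exact Finset.sum_congr rfl fun p _ => Finset.sum_comm
  have step3 : (∑ p ∈ (univ : Finset (Fin n)).offDiag, ∑ q ∈ (univ : Finset (Fin n)).offDiag,
        ∑ h : Fin n → Fin m, ∑ s : Fin n → Bool, T h s p * T h s q)
      = ∑ p ∈ (univ : Finset (Fin n)).offDiag,
          (2 * (((m:ℝ)^n / m) * 2 ^ n)) * (x p.1 * x p.2)^2 := by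
    refine Finset.sum_congr rfl fun p hpmem => ?_
    have hp : p.1 ≠ p.2 := (Finset.mem_offDiag.1 hpmem).2.2
    have inner : ∀ q ∈ (univ : Finset (Fin n)).offDiag,
        (∑ h : Fin n → Fin m, ∑ s : Fin n → Bool, T h s p * T h s q)
        = if q ∈ ({p, (p.2, p.1)} : Finset (Fin n × Fin n))
            then ((m:ℝ)^n / m) * 2 ^ n * (x p.1 * x p.2)^2 else 0 := by
      intro q hqmem
      have hq : q.1 ≠ q.2 := (Finset.mem_offDiag.1 hqmem).2.2
      rw [pair_sum n m hm x p q hp hq]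
      congr 1
      simp [Finset.mem_insert, Finset.mem_singleton, Prod.ext_iff]
    rw [Finset.sum_congr rfl inner, Finset.sum_ite_mem]
    have hsub : (univ : Finset (Fin n)).offDiag ∩ ({p, (p.2, p.1)} : Finset (Fin n × Fin n))
        = ({p, (p.2, p.1)} : Finset (Fin n × Fin n)) := by
      rw [Finset.inter_eq_right]
      intro q hq
      rcases Finset.mem_insert.1 hq with rfl | hq'
      · exact hpmem
      · rw [Finset.mem_singleton.1 hq']
        exact Finset.mem_offDiag.2 ⟨Finset.mem_univ _, Finset.mem_univ _, Ne.symm hp⟩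
    have hne : p ≠ (p.2, p.1) := by
      intro h
      exact hp ((Prod.ext_iff.1 h).1.trans rfl)
    rw [hsub, Finset.sum_pair hne]
    ring
  have xsum : (∑ p ∈ (univ : Finset (Fin n)).offDiag, (x p.1 * x p.2)^2)
      = (∑ i : Fin n, x i ^ 2) ^ 2 - ∑ i : Fin n, x i ^ 4 := by
    have h1 : (∑ i : Fin n, x i ^ 2) ^ 2
        = ∑ p ∈ (univ : Finset (Fin n)) ×ˢ (univ : Finset (Fin n)), (x p.1 * x p.2)^2 := by
      rw [sq, Finset.sum_mul_sum, ← Finset.sum_product']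
      exact Finset.sum_congr rfl fun p _ => by rw [mul_pow]
    have h2 : (∑ p ∈ (univ : Finset (Fin n)) ×ˢ (univ : Finset (Fin n)), (x p.1 * x p.2)^2)
        = (∑ i : Fin n, x i ^ 4)
          + ∑ p ∈ (univ : Finset (Fin n)).offDiag, (x p.1 * x p.2)^2 := by
      rw [← Finset.diag_union_offDiag (univ : Finset (Fin n)),
        Finset.sum_union (Finset.disjoint_diag_offDiag _)]
      congr 1
      rw [Finset.sum_diag]
      exact Finset.sum_congr rfl fun i _ => by ring
    rw [h1, h2]
    ring
  have total : (∑ h : Fin n → Fin m, ∑ s : Fin n → Bool,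
        ((∑ j : Fin m,
            (∑ i : Fin n, if h i = j then (if s i then (1:ℝ) else -1) * x i else 0) ^ 2)
          - ∑ i : Fin n, x i ^ 2) ^ 2)
      = (2 * (((m:ℝ)^n / m) * 2 ^ n)) * ((∑ i : Fin n, x i ^ 2) ^ 2 - ∑ i : Fin n, x i ^ 4) := by
    rw [step1, step2, step3, ← Finset.mul_sum, xsum]
  rw [total]
  have hm0 : (m:ℝ) ≠ 0 := by positivity
  have hmn : (m:ℝ)^n ≠ 0 := by positivity
  have h2n : (2:ℝ)^n ≠ 0 := by positivity
  field_simp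
end
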